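/- arXiv:1401.4148 — 2 statements merged into one kernel-verified Lean document; each statement's English description precedes it below -/
import Mathlib

section
/- The d-dimensional Lebesgue measure of the region R_{b,T} = {(x,y) ∈ ℝ^m × ℝ^n : ‖x‖^m ‖y‖^n ≤ b, 1 ≤ ‖y‖ < T} equals b · B_m · C_n · log T, where B_m is the volume of the unit ball in ℝ^m, C_n is the surface area of the unit sphere in ℝ^n, ‖·‖ denotes the Euclidean norm, b > 0, and T > 1. -/
/-!
By Fubini, slice the region over `y ∈ ℝⁿ` with `1 ≤ ‖y‖ < T`: the fibre is the closed ball of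
radius `(b / ‖y‖ⁿ)^(1/m)` in `ℝᵐ`, of volume `B_m · b / ‖y‖ⁿ`. This is a radial function of `y`,
and in polar coordinates its integral is `n B_n ∫₁ᵀ r^(n-1) · b / rⁿ dr = n B_n · b log T`.
-/

open MeasureTheory Set Metric Module

section

variable {E : Type*} [NormedAddCommGroup E] [NormedSpace ℝ E] [FiniteDimensional ℝ E]
  [MeasurableSpace E] [BorelSpace E] (μ : Measure E) [μ.IsAddHaarMeasure]

theorem addHaar_setOf_norm_pow_mul_le {m : ℕ} (hm : m ≠ 0) (hE : finrank ℝ E = m) {b c : ℝ}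
    (hb : 0 ≤ b) (hc : 0 < c) :
    μ {x | ‖x‖ ^ m * c ≤ b} = ENNReal.ofReal (b / c) * μ (ball 0 1) := by
  have hbc : 0 ≤ b / c := div_nonneg hb hc.le
  set r := (b / c) ^ (m⁻¹ : ℝ)
  have hr : 0 ≤ r := Real.rpow_nonneg hbc _
  have hrm : r ^ m = b / c := Real.rpow_inv_natCast_pow hbc hm
  have hset : {x : E | ‖x‖ ^ m * c ≤ b} = closedBall 0 r := by
    ext x
    rw [mem_ofPred_eq, mem_closedBall_zero_iff, ← le_div_iff₀ hc, ← hrm,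
      pow_le_pow_iff_left₀ (norm_nonneg x) hr hm]
  rw [hset, μ.addHaar_closedBall 0 hr, hE, hrm]

theorem integral_annulus_inv_norm_pow {n : ℕ} (hn : n ≠ 0) (hE : finrank ℝ E = n) {T : ℝ}
    (hT : 1 ≤ T) :
    ∫ y in norm ⁻¹' Ico 1 T, (‖y‖ ^ n)⁻¹ ∂μ = n * μ.real (ball 0 1) * Real.log T := by
  have : Nontrivial E := nontrivial_of_finrank_pos (hE ▸ Nat.pos_of_ne_zero hn)
  have hradial : ∀ r ∈ Ioi (0 : ℝ),
      r ^ (n - 1) • (Ico 1 T).indicator (fun r ↦ (r ^ n)⁻¹) r = (Ico 1 T).indicator (·⁻¹) r := by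
    intro r (hr : 0 < r)
    by_cases h : r ∈ Ico 1 T
    · rw [indicator_of_mem h, indicator_of_mem h, smul_eq_mul, ← pow_sub_one_mul hn r]
      field_simp
    · rw [indicator_of_notMem h, indicator_of_notMem h, smul_zero]
  have hcomp : (norm ⁻¹' Ico 1 T).indicator (fun y : E ↦ (‖y‖ ^ n)⁻¹) =
      fun y ↦ (Ico 1 T).indicator (fun r ↦ (r ^ n)⁻¹) ‖y‖ :=
    funext fun _ ↦ indicator_comp_right (g := fun r : ℝ ↦ (r ^ n)⁻¹) (norm : E → ℝ)
  rw [← integral_indicator (measurableSet_Ico.preimage measurable_norm),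
    hcomp, integral_fun_norm_addHaar μ, hE,
    setIntegral_congr_fun measurableSet_Ioi hradial, setIntegral_indicator measurableSet_Ico,
    inter_eq_self_of_subset_right (s := Ioi 0) fun r hr ↦ zero_lt_one.trans_le hr.1,
    integral_Ico_eq_integral_Ioo, ← integral_Ioc_eq_integral_Ioo,
    ← intervalIntegral.integral_of_le hT, integral_inv_of_pos one_pos (by linarith), div_one,
    nsmul_eq_mul, smul_eq_mul, mul_assoc]

theorem lintegral_annulus_div_norm_pow {n : ℕ} (hn : n ≠ 0) (hE : finrank ℝ E = n) {T : ℝ}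
    (hT : 1 ≤ T) {b : ℝ} (hb : 0 ≤ b) :
    ∫⁻ y in norm ⁻¹' Ico 1 T, ENNReal.ofReal (b / ‖y‖ ^ n) ∂μ =
      ENNReal.ofReal (b * (n * μ.real (ball 0 1) * Real.log T)) := by
  have hA : MeasurableSet ((norm : E → ℝ) ⁻¹' Ico 1 T) := measurableSet_Ico.preimage measurable_norm
  have hint : IntegrableOn (fun y : E ↦ (‖y‖ ^ n)⁻¹) (norm ⁻¹' Ico 1 T) μ := by
    refine Measure.integrableOn_of_bounded (M := 1) ?_ (by fun_prop) ?_
    · exact ((measure_mono fun y hy ↦ mem_closedBall_zero_iff.2 hy.2.le).trans_lt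
        measure_closedBall_lt_top).ne
    · refine ae_restrict_of_forall_mem hA fun y hy ↦ ?_
      rw [norm_inv, norm_pow, norm_norm]
      exact inv_le_one_of_one_le₀ (one_le_pow₀ hy.1)
  simp_rw [div_eq_mul_inv]
  rw [← ofReal_integral_eq_lintegral_ofReal (hint.const_mul b)
      (ae_restrict_of_forall_mem hA fun y _ ↦ by positivity),
    integral_const_mul, integral_annulus_inv_norm_pow μ hn hE hT]

variable {F : Type*} [NormedAddCommGroup F] [NormedSpace ℝ F] [FiniteDimensional ℝ F]
  [MeasurableSpace F] [BorelSpace F] (ν : Measure F) [ν.IsAddHaarMeasure]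

theorem prod_setOf_norm_pow_mul_norm_pow_le {m n : ℕ} (hm : m ≠ 0) (hE : finrank ℝ E = m)
    (hn : n ≠ 0) (hF : finrank ℝ F = n) {b T : ℝ} (hb : 0 ≤ b) (hT : 1 ≤ T) :
    μ.prod ν {p : E × F | ‖p.1‖ ^ m * ‖p.2‖ ^ n ≤ b ∧ 1 ≤ ‖p.2‖ ∧ ‖p.2‖ < T} =
      ENNReal.ofReal (b * μ.real (ball 0 1) * (n * ν.real (ball 0 1)) * Real.log T) := by
  set A : Set F := norm ⁻¹' Ico 1 T
  have hA : MeasurableSet A := measurableSet_Ico.preimage measurable_norm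
  have hS : MeasurableSet {p : E × F | ‖p.1‖ ^ m * ‖p.2‖ ^ n ≤ b ∧ 1 ≤ ‖p.2‖ ∧ ‖p.2‖ < T} := by
    measurability
  have hslice : ∀ y : F,
      μ ((·, y) ⁻¹' {p : E × F | ‖p.1‖ ^ m * ‖p.2‖ ^ n ≤ b ∧ 1 ≤ ‖p.2‖ ∧ ‖p.2‖ < T}) =
        A.indicator (fun y ↦ ENNReal.ofReal (b / ‖y‖ ^ n) * μ (ball 0 1)) y := by
    intro y
    by_cases hy : y ∈ A
    · rw [indicator_of_mem hy, ← addHaar_setOf_norm_pow_mul_le μ hm hE hb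
        (pow_pos (zero_lt_one.trans_le hy.1) n)]
      simp [hy.1, hy.2]
    · rw [indicator_of_notMem hy, ← measure_empty (μ := μ)]
      congr 1
      ext x
      simp only [mem_preimage, mem_ofPred_eq, mem_empty_iff_false, iff_false, not_and]
      exact fun _ h₁ h₂ ↦ hy ⟨h₁, h₂⟩
  rw [Measure.prod_apply_symm hS, lintegral_congr hslice, lintegral_indicator hA,
    lintegral_mul_const' _ _ measure_ball_lt_top.ne, lintegral_annulus_div_norm_pow ν hn hF hT hb,
    ← ofReal_measureReal measure_ball_lt_top.ne,
    ← ENNReal.ofReal_mul (mul_nonneg hb (mul_nonneg (by positivity) (Real.log_nonneg hT)))]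
  congr 1
  ring

end

/-- The `d`-dimensional Lebesgue measure of
`R_{b,T} = {(x,y) ∈ ℝ^m × ℝ^n : ‖x‖^m ‖y‖^n ≤ b, 1 ≤ ‖y‖ < T}` equals
`b · B_m · C_n · log T`, where `B_m` is the volume of the unit ball in `ℝ^m`
and `C_n = n · B_n` is the surface area of the unit sphere in `ℝ^n`. -/
theorem stmt_1 (m n : ℕ) (hm : 1 ≤ m) (hn : 1 ≤ n) (b T : ℝ) (hb : 0 < b) (hT : 1 < T) :
    volume {p : EuclideanSpace ℝ (Fin m) × EuclideanSpace ℝ (Fin n) |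
        ‖p.1‖ ^ m * ‖p.2‖ ^ n ≤ b ∧ 1 ≤ ‖p.2‖ ∧ ‖p.2‖ < T} =
      ENNReal.ofReal (b * (volume (Metric.ball (0 : EuclideanSpace ℝ (Fin m)) 1)).toReal *
        ((n : ℝ) * (volume (Metric.ball (0 : EuclideanSpace ℝ (Fin n)) 1)).toReal) *
        Real.log T) := by
  rw [Measure.volume_eq_prod]
  exact prod_setOf_norm_pow_mul_norm_pow_le volume volume (Nat.one_le_iff_ne_zero.mp hm)
    finrank_euclideanSpace_fin (Nat.one_le_iff_ne_zero.mp hn) finrank_euclideanSpace_fin hb.le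
    hT.le
end

section
/- Let ε > 0. There exists δ > 0 such that for all B ∈ GL(m,ℝ), C ∈ M_{n×m}(ℝ), D ∈ GL(n,ℝ) with ‖B − I‖ ≤ δ, ‖C‖ ≤ δ, ‖D − I‖ ≤ δ, and all (x,y) ∈ ℝ^m × ℝ^n with ‖x‖^m ‖y‖^n ≤ b and ‖y‖ ≥ 1, one has (1−ε)·‖x‖^m‖y‖^n ≤ ‖Bx‖^m · ‖Cx + Dy‖^n ≤ (1+ε)·‖x‖^m‖y‖^n + ε. -/
/-!
For `‖y‖ ≥ 1` the constraint `‖x‖^m ‖y‖^n ≤ b` forces `‖x‖ ≤ R := max b 1`, hence `‖x‖ ≤ R ‖y‖`.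
So if `B`, `C`, `D` are `δ`-close to `I`, `0`, `I`, then `Bx` is `c`-relatively close to `x` and
`Cx + Dy` is `c`-relatively close to `y`, with `c = δ (R + 1)`. The product `‖Bx‖^m ‖Cx + Dy‖^n`
is then squeezed between `(1 ∓ c)^(m+n) ‖x‖^m ‖y‖^n`, and both factors `(1 ∓ c)^(m+n)` are within
`2^(m+n) c` of `1`.
-/

lemma one_sub_two_pow_mul_le_one_sub_pow {c : ℝ} (hc0 : 0 ≤ c) (hc2 : c ≤ 2) (k : ℕ) :
    1 - 2 ^ k * c ≤ (1 - c) ^ k := by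
  have hbernoulli : 1 + k * (-c) ≤ (1 + -c) ^ k := one_add_mul_le_pow (by linarith) k
  have hk : (k : ℝ) ≤ 2 ^ k := by exact_mod_cast Nat.lt_two_pow_self.le
  rw [← sub_eq_add_neg] at hbernoulli
  nlinarith

lemma one_add_pow_le_one_add_two_pow_sub_one_mul {c : ℝ} (hc0 : 0 ≤ c) (hc1 : c ≤ 1) (k : ℕ) :
    (1 + c) ^ k ≤ 1 + (2 ^ k - 1) * c := by
  induction k with
  | zero => simp
  | succ k ih =>
    have h2k : (1 : ℝ) ≤ 2 ^ k := one_le_pow₀ (by norm_num)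
    have hconvex : 0 ≤ (2 ^ k - 1) * c * (1 - c) :=
      mul_nonneg (mul_nonneg (by linarith) hc0) (by linarith)
    calc (1 + c) ^ (k + 1) = (1 + c) ^ k * (1 + c) := pow_succ _ _
      _ ≤ (1 + (2 ^ k - 1) * c) * (1 + c) := by gcongr
      _ ≤ 1 + (2 ^ (k + 1) - 1) * c := by rw [pow_succ]; nlinarith

lemma le_max_one_of_pow_mul_le {a s b : ℝ} {m : ℕ} (hs : 1 ≤ s) (hm : m ≠ 0)
    (hb : a ^ m * s ≤ b) : a ≤ max b 1 := by
  by_contra! h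
  have ha1 : 1 ≤ a := (le_max_right b 1).trans h.le
  have : a ≤ a ^ m * s := (le_self_pow₀ ha1 hm).trans (le_mul_of_one_le_right (by positivity) hs)
  linarith [le_max_left b 1]

section NormedGroup

variable {E F : Type*} [SeminormedAddCommGroup E] [SeminormedAddCommGroup F]

lemma norm_mem_Icc_of_norm_sub_le {u x : E} {c : ℝ} (h : ‖u - x‖ ≤ c * ‖x‖) :
    ‖u‖ ∈ Set.Icc ((1 - c) * ‖x‖) ((1 + c) * ‖x‖) := by
  have := abs_norm_sub_norm_le u x
  rw [abs_le] at this
  constructor <;> linarith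

lemma pow_mul_pow_norm_bounds {u x : E} {v y : F} {c : ℝ} (hc0 : 0 ≤ c) (hc1 : c ≤ 1)
    (hu : ‖u - x‖ ≤ c * ‖x‖) (hv : ‖v - y‖ ≤ c * ‖y‖) (m n : ℕ) :
    (1 - c) ^ (m + n) * (‖x‖ ^ m * ‖y‖ ^ n) ≤ ‖u‖ ^ m * ‖v‖ ^ n ∧
      ‖u‖ ^ m * ‖v‖ ^ n ≤ (1 + c) ^ (m + n) * (‖x‖ ^ m * ‖y‖ ^ n) := by
  obtain ⟨hu_lower, hu_upper⟩ := norm_mem_Icc_of_norm_sub_le hu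
  obtain ⟨hv_lower, hv_upper⟩ := norm_mem_Icc_of_norm_sub_le hv
  have hc : 0 ≤ 1 - c := by linarith
  constructor
  · calc (1 - c) ^ (m + n) * (‖x‖ ^ m * ‖y‖ ^ n)
          = ((1 - c) * ‖x‖) ^ m * ((1 - c) * ‖y‖) ^ n := by rw [mul_pow, mul_pow, pow_add]; ring
      _ ≤ ‖u‖ ^ m * ‖v‖ ^ n := by gcongr
  · calc ‖u‖ ^ m * ‖v‖ ^ n ≤ ((1 + c) * ‖x‖) ^ m * ((1 + c) * ‖y‖) ^ n := by gcongr
      _ = (1 + c) ^ (m + n) * (‖x‖ ^ m * ‖y‖ ^ n) := by rw [mul_pow, mul_pow, pow_add]; ring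

end NormedGroup

namespace ContinuousLinearMap

variable {E F : Type*} [SeminormedAddCommGroup E] [NormedSpace ℝ E]
  [SeminormedAddCommGroup F] [NormedSpace ℝ F]

lemma norm_apply_sub_self_le {f : E →L[ℝ] E} {δ : ℝ} (hf : ‖f - ContinuousLinearMap.id ℝ E‖ ≤ δ)
    (x : E) : ‖f x - x‖ ≤ δ * ‖x‖ :=
  (f - ContinuousLinearMap.id ℝ E).le_of_opNorm_le hf x

lemma norm_apply_add_apply_sub_le {C : E →L[ℝ] F} {D : F →L[ℝ] F} {δ R : ℝ} (hC : ‖C‖ ≤ δ)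
    (hD : ‖D - ContinuousLinearMap.id ℝ F‖ ≤ δ) {x : E} {y : F} (hxy : ‖x‖ ≤ R * ‖y‖) :
    ‖C x + D y - y‖ ≤ δ * (R + 1) * ‖y‖ := by
  have hδ : 0 ≤ δ := (norm_nonneg C).trans hC
  calc ‖C x + D y - y‖ ≤ ‖C x‖ + ‖D y - y‖ := by rw [add_sub_assoc]; exact norm_add_le _ _
    _ ≤ δ * (R * ‖y‖) + δ * ‖y‖ := by
      gcongr
      · exact (C.le_of_opNorm_le hC x).trans (by gcongr)
      · exact D.norm_apply_sub_self_le hD y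
    _ = δ * (R + 1) * ‖y‖ := by ring

end ContinuousLinearMap

theorem stmt_9_general (m n : ℕ) (hm : 1 ≤ m) (b : ℝ)
    (ε : ℝ) (hε : 0 < ε) :
    ∃ δ : ℝ, 0 < δ ∧
      ∀ (B : EuclideanSpace ℝ (Fin m) →L[ℝ] EuclideanSpace ℝ (Fin m))
        (C : EuclideanSpace ℝ (Fin m) →L[ℝ] EuclideanSpace ℝ (Fin n))
        (D : EuclideanSpace ℝ (Fin n) →L[ℝ] EuclideanSpace ℝ (Fin n)),
        Function.Bijective B → Function.Bijective D →
        ‖B - ContinuousLinearMap.id ℝ (EuclideanSpace ℝ (Fin m))‖ ≤ δ → ‖C‖ ≤ δ →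
        ‖D - ContinuousLinearMap.id ℝ (EuclideanSpace ℝ (Fin n))‖ ≤ δ →
        ∀ (x : EuclideanSpace ℝ (Fin m)) (y : EuclideanSpace ℝ (Fin n)),
          ‖x‖ ^ m * ‖y‖ ^ n ≤ b → 1 ≤ ‖y‖ →
          (1 - ε) * (‖x‖ ^ m * ‖y‖ ^ n) ≤ ‖B x‖ ^ m * ‖C x + D y‖ ^ n ∧
            ‖B x‖ ^ m * ‖C x + D y‖ ^ n ≤ (1 + ε) * (‖x‖ ^ m * ‖y‖ ^ n) + ε := by
  set R := max b 1
  set c := min 1 (ε / 2 ^ (m + n))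
  have hR : 1 ≤ R + 1 := by linarith [le_max_right b 1]
  have hc0 : 0 ≤ c := le_min zero_le_one (by positivity)
  have hc1 : c ≤ 1 := min_le_left _ _
  have hcε : 2 ^ (m + n) * c ≤ ε :=
    (le_div_iff₀' (by positivity)).mp (min_le_right _ _)
  refine ⟨c / (R + 1), by positivity, fun B C D _ _ hB hC hD x y hxy hy => ?_⟩
  have hxR : ‖x‖ ≤ R * ‖y‖ :=
    (le_max_one_of_pow_mul_le (one_le_pow₀ hy) (by omega) hxy).trans
      (le_mul_of_one_le_right (by linarith) hy)
  have hBx : ‖B x - x‖ ≤ c * ‖x‖ :=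
    (B.norm_apply_sub_self_le hB x).trans (by gcongr; exact div_le_self hc0 hR)
  have hCDy : ‖C x + D y - y‖ ≤ c * ‖y‖ :=
    (ContinuousLinearMap.norm_apply_add_apply_sub_le hC hD hxR).trans_eq
      (by rw [div_mul_cancel₀ c (by positivity)])
  obtain ⟨hlower, hupper⟩ := pow_mul_pow_norm_bounds hc0 hc1 hBx hCDy m n
  constructor
  · calc (1 - ε) * (‖x‖ ^ m * ‖y‖ ^ n) ≤ (1 - c) ^ (m + n) * (‖x‖ ^ m * ‖y‖ ^ n) := by
          gcongr
          linarith [one_sub_two_pow_mul_le_one_sub_pow hc0 (by linarith) (m + n)]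
      _ ≤ _ := hlower
  · calc _ ≤ (1 + c) ^ (m + n) * (‖x‖ ^ m * ‖y‖ ^ n) := hupper
      _ ≤ (1 + ε) * (‖x‖ ^ m * ‖y‖ ^ n) := by
          gcongr
          linarith [one_add_pow_le_one_add_two_pow_sub_one_mul hc0 hc1 (m + n)]
      _ ≤ _ := le_add_of_nonneg_right hε.le

/-- Key distortion estimate: for every `ε > 0` there is `δ > 0` such that whenever
`‖B - I‖ ≤ δ`, `‖C‖ ≤ δ`, `‖D - I‖ ≤ δ` (operator norms) and `‖x‖^m ‖y‖^n ≤ b`, `‖y‖ ≥ 1`,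
one has `(1-ε)‖x‖^m‖y‖^n ≤ ‖Bx‖^m ‖Cx + Dy‖^n ≤ (1+ε)‖x‖^m‖y‖^n + ε`. -/
theorem stmt_9 (m n : ℕ) (hm : 1 ≤ m) (hn : 1 ≤ n) (b : ℝ) (hb : 0 < b)
    (ε : ℝ) (hε : 0 < ε) :
    ∃ δ : ℝ, 0 < δ ∧
      ∀ (B : EuclideanSpace ℝ (Fin m) →L[ℝ] EuclideanSpace ℝ (Fin m))
        (C : EuclideanSpace ℝ (Fin m) →L[ℝ] EuclideanSpace ℝ (Fin n))
        (D : EuclideanSpace ℝ (Fin n) →L[ℝ] EuclideanSpace ℝ (Fin n)),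
        Function.Bijective B → Function.Bijective D →
        ‖B - ContinuousLinearMap.id ℝ (EuclideanSpace ℝ (Fin m))‖ ≤ δ → ‖C‖ ≤ δ →
        ‖D - ContinuousLinearMap.id ℝ (EuclideanSpace ℝ (Fin n))‖ ≤ δ →
        ∀ (x : EuclideanSpace ℝ (Fin m)) (y : EuclideanSpace ℝ (Fin n)),
          ‖x‖ ^ m * ‖y‖ ^ n ≤ b → 1 ≤ ‖y‖ →
          (1 - ε) * (‖x‖ ^ m * ‖y‖ ^ n) ≤ ‖B x‖ ^ m * ‖C x + D y‖ ^ n ∧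
            ‖B x‖ ^ m * ‖C x + D y‖ ^ n ≤ (1 + ε) * (‖x‖ ^ m * ‖y‖ ^ n) + ε :=
  stmt_9_general m n hm b ε hε
end
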